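/- Let {I_j : j ∈ ω} be a partition of ω into consecutive finite intervals with |I_j| > j, let n ≤ m and I = I_n ∪ I_{n+1} ∪ ⋯ ∪ I_m, and let T ⊆ 2^I satisfy m(T) · ∏_{j=n}^{m-1} (1 + 2^{-j}) < 1/2 (this holds, e.g., when m(T) ≤ 1/4 and n ≥ 2). Suppose s is a function with domain [n,m] such that s(j) ∈ I_j for each j and C_s ⊆ T, where C_s = {t ∈ 2^I : t(s(j)) = 0 for all j ∈ [n,m]}. Then there exist k ∈ [n,m) and a function t : I_n ∪ ⋯ ∪ I_{k-1} → {0,1} (t = ∅ when k = n) with t(s(j)) = 0 for all j ∈ [n,k) and T[t] ≠ ∅, such that for every t' : I_k → {0,1} with t'(s(k)) = 0 one has m(T[t⌢t']) > (1 + 2^{-k}) · m(T[t]). -/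

import Mathlib

open Set

/-! Suppose no level `k` works. Then, starting from the empty `t`, one can extend `t` level by
level, each time by a `t'` with `t'(s k) = 0` along which the relative mass grows by at most the
factor `1 + 2^{-k}`. At level `m` this produces a `t` with `m(T[t]) ≤ m(T) · ∏ (1 + 2^{-j}) < 1/2`.
But since `C_s ⊆ T`, the set `T[t]` contains every `u : I_m → 2` with `u(s m) = 0`, so
`m(T[t]) ≥ 1/2`. -/

section EqOffFinset

variable {α β : Type*}

theorem range_extend_val_eq_setOf (F : Finset α) (g : α → β) :
    range (fun f : F → β => Function.extend Subtype.val f g) =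
      {w : α → β | ∀ i ∉ F, w i = g i} := by
  have not_mem_range (i : α) (hi : i ∉ F) : ¬∃ x : F, x.val = i := fun ⟨x, hx⟩ => hi (hx ▸ x.2)
  ext w
  constructor
  · rintro ⟨f, rfl⟩ i hi
    exact Function.extend_apply' _ _ _ (not_mem_range i hi)
  · intro hw
    refine ⟨fun x => w x, funext fun i => ?_⟩
    by_cases hi : i ∈ F
    · exact Subtype.val_injective.extend_apply _ _ ⟨i, hi⟩
    · exact (Function.extend_apply' _ _ _ (not_mem_range i hi)).trans (hw i hi).symm

theorem ncard_setOf_eq_off_finset [Finite β] (F : Finset α) (g : α → β) :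
    {w : α → β | ∀ i ∉ F, w i = g i}.ncard = Nat.card β ^ F.card := by
  rw [← range_extend_val_eq_setOf, ncard_range_of_injective
    (Function.extend_injective Subtype.val_injective g), Nat.card_fun]
  simp

theorem finite_setOf_eq_off_finset [Finite β] (F : Finset α) (g : α → β) :
    {w : α → β | ∀ i ∉ F, w i = g i}.Finite := by
  rw [← range_extend_val_eq_setOf]
  exact finite_range _

end EqOffFinset

theorem exists_le_mul_prod_of_step {α : Type*} (P : ℕ → α → Prop) (μ : ℕ → α → ℝ) (c : ℕ → ℝ)
    (hc : ∀ k, 0 ≤ c k) {n m : ℕ} (hnm : n ≤ m) {x₀ : α} (hx₀ : P n x₀)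
    (step : ∀ k, n ≤ k → k < m → ∀ x, P k x → ∃ y, P (k + 1) y ∧ μ (k + 1) y ≤ c k * μ k x) :
    ∃ x, P m x ∧ μ m x ≤ μ n x₀ * ∏ j ∈ Finset.Ico n m, c j := by
  induction m, hnm using Nat.le_induction with
  | base => exact ⟨x₀, hx₀, by simp⟩
  | succ k hk ih =>
    obtain ⟨x, hx, hμx⟩ := ih fun j hj hjk => step j hj (hjk.trans k.lt_succ_self)
    obtain ⟨y, hy, hμy⟩ := step k hk k.lt_succ_self x hx
    refine ⟨y, hy, ?_⟩
    calc μ (k + 1) y ≤ c k * μ k x := hμy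
      _ ≤ c k * (μ n x₀ * ∏ j ∈ Finset.Ico n k, c j) := mul_le_mul_of_nonneg_left hμx (hc k)
      _ = μ n x₀ * ∏ j ∈ Finset.Ico n (k + 1), c j := by rw [Finset.prod_Ico_succ_top hk]; ring

section Fiber

variable {β : Type*}

/-- `fiber T t (a n) (a k)` is `T[t]` for `t` on `I_n ∪ ⋯ ∪ I_{k-1}`, and `splice t t' (a k)` is
`t⌢t'`. -/
def fiber (T : Set (ℕ → β)) (t : ℕ → β) (p q : ℕ) : Set (ℕ → β) :=
  {w ∈ T | ∀ i, p ≤ i → i < q → w i = t i}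

def splice (t t' : ℕ → β) (q : ℕ) : ℕ → β := fun i => if i < q then t i else t' i

theorem fiber_self (T : Set (ℕ → β)) (t : ℕ → β) (p : ℕ) : fiber T t p p = T :=
  sep_eq_self_iff_mem_true.2 fun _ _ _ hpi hip => absurd hpi (not_le.2 hip)

theorem fiber_splice {p q r : ℕ} (hpq : p ≤ q) (hqr : q ≤ r) (T : Set (ℕ → β)) (t t' : ℕ → β) :
    fiber T (splice t t' q) p r =
      {w ∈ T | (∀ i, p ≤ i → i < q → w i = t i) ∧ ∀ i, q ≤ i → i < r → w i = t' i} := by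
  ext w
  simp only [fiber, splice, mem_ofPred_eq]
  refine and_congr_right fun _ => ⟨fun h => ⟨fun i hpi hiq => ?_, fun i hqi hir => ?_⟩, ?_⟩
  · simpa [hiq] using h i hpi (hiq.trans_le hqr)
  · simpa [hqi.not_gt] using h i (hpq.trans hqi) hir
  · rintro ⟨hleft, hright⟩ i hpi hir
    by_cases hiq : i < q
    · simpa [hiq] using hleft i hpi hiq
    · simpa [hiq] using hright i (not_lt.1 hiq) hir

end Fiber

section Intervals

variable {a : ℕ → ℕ} (hmono : StrictMono a) {n m : ℕ} {T : Set (ℕ → Bool)} {s : ℕ → ℕ}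
  (hs : ∀ j, n ≤ j → j ≤ m → a j ≤ s j ∧ s j < a (j + 1))
  (hCs : ∀ t : ℕ → Bool, (∀ i, (i < a n ∨ a (m + 1) ≤ i) → t i = false) →
    (∀ j, n ≤ j → j ≤ m → t (s j) = false) → t ∈ T)
include hmono hs

theorem splice_apply_eq_false {k : ℕ} (hkm : k ≤ m) {t t' : ℕ → Bool}
    (ht : ∀ j, n ≤ j → j < k → t (s j) = false) (ht' : t' (s k) = false) :
    ∀ j, n ≤ j → j < k + 1 → splice t t' (a k) (s j) = false := by
  intro j hnj hjk
  obtain hjk | rfl := Nat.lt_succ_iff_lt_or_eq.1 hjk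
  · have hsk : s j < a k := (hs j hnj (by omega)).2.trans_le (hmono.monotone hjk)
    simpa [splice, hsk] using ht j hnj hjk
  · simpa [splice, (hs j hnj hkm).1.not_gt] using ht'

include hCs

theorem mem_fiber_of_eq_off {k : ℕ} (hnk : n ≤ k) (hkm : k ≤ m) {t : ℕ → Bool}
    (ht : ∀ j, n ≤ j → j < k → t (s j) = false) {F : Finset ℕ}
    (hF : ∀ i ∈ F, a k ≤ i ∧ i < a (m + 1)) (hsF : ∀ j, k ≤ j → j ≤ m → s j ∉ F) {w : ℕ → Bool}
    (hw : ∀ i ∉ F, w i = (Finset.Ico (a n) (a k)).piecewise t (fun _ => false) i) :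
    w ∈ fiber T t (a n) (a k) := by
  have hank : a n ≤ a k := hmono.monotone hnk
  have hakm : a k ≤ a (m + 1) := hmono.monotone (by omega)
  refine ⟨hCs w (fun i hi => ?_) (fun j hnj hjm => ?_), fun i hni hik => ?_⟩
  · have hiF : i ∉ F := fun h => by have := hF i h; omega
    rw [hw i hiF, Finset.piecewise_eq_of_notMem _ _ _ (by simp; omega)]
  · obtain ⟨hsj, hsj'⟩ := hs j hnj hjm
    by_cases hjk : j < k
    · have hsk : s j < a k := hsj'.trans_le (hmono.monotone hjk)
      have hsn : a n ≤ s j := (hmono.monotone hnj).trans hsj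
      rw [hw _ fun h => by have := hF _ h; omega,
        Finset.piecewise_eq_of_mem _ _ _ (Finset.mem_Ico.2 ⟨hsn, hsk⟩), ht j hnj hjk]
    · have hks : a k ≤ s j := (hmono.monotone (not_lt.1 hjk)).trans hsj
      rw [hw _ (hsF j (not_lt.1 hjk) hjm),
        Finset.piecewise_eq_of_notMem _ _ _ (by simp; omega)]
  · rw [hw i fun h => by have := hF i h; omega,
      Finset.piecewise_eq_of_mem _ _ _ (Finset.mem_Ico.2 ⟨hni, hik⟩)]

theorem fiber_nonempty {k : ℕ} (hnk : n ≤ k) (hkm : k ≤ m) {t : ℕ → Bool}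
    (ht : ∀ j, n ≤ j → j < k → t (s j) = false) : (fiber T t (a n) (a k)).Nonempty :=
  ⟨_, mem_fiber_of_eq_off hmono hs hCs hnk hkm ht (F := ∅) (by simp) (by simp) fun _ _ => rfl⟩

theorem two_pow_le_ncard_fiber (hTfin : T.Finite) (hnm : n ≤ m) {t : ℕ → Bool}
    (ht : ∀ j, n ≤ j → j < m → t (s j) = false) :
    2 ^ (a (m + 1) - a m - 1) ≤ (fiber T t (a n) (a m)).ncard := by
  obtain ⟨hsm, hsm'⟩ := hs m hnm le_rfl
  set F := (Finset.Ico (a m) (a (m + 1))).erase (s m)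
  have hF : ∀ i ∈ F, a m ≤ i ∧ i < a (m + 1) := fun i hi =>
    Finset.mem_Ico.1 (Finset.mem_of_mem_erase hi)
  have hsF : ∀ j, m ≤ j → j ≤ m → s j ∉ F := fun j hmj hjm => by
    obtain rfl : j = m := le_antisymm hjm hmj
    exact Finset.notMem_erase _ _
  set g := (Finset.Ico (a n) (a m)).piecewise t (fun _ => false)
  calc 2 ^ (a (m + 1) - a m - 1) = {w : ℕ → Bool | ∀ i ∉ F, w i = g i}.ncard := by
        rw [ncard_setOf_eq_off_finset, Nat.card_eq_fintype_card, Fintype.card_bool,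
          Finset.card_erase_of_mem (Finset.mem_Ico.2 ⟨hsm, hsm'⟩), Nat.card_Ico]
    _ ≤ (fiber T t (a n) (a m)).ncard :=
        ncard_le_ncard (fun w hw => mem_fiber_of_eq_off hmono hs hCs hnm le_rfl ht hF hsF hw)
          (hTfin.subset (sep_subset _ _))

theorem one_half_le_mass_fiber (hTfin : T.Finite) (hnm : n ≤ m) {t : ℕ → Bool}
    (ht : ∀ j, n ≤ j → j < m → t (s j) = false) :
    1 / 2 ≤ ((fiber T t (a n) (a m)).ncard : ℝ) / 2 ^ (a (m + 1) - a m) := by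
  obtain ⟨d, hd⟩ : ∃ d, a (m + 1) - a m = d + 1 :=
    Nat.exists_eq_add_one.2 (Nat.sub_pos_of_lt (hmono m.lt_succ_self))
  have hcard := two_pow_le_ncard_fiber hmono hs hCs hTfin hnm ht
  rw [hd, Nat.add_sub_cancel] at hcard
  rw [hd, le_div_iff₀ (by positivity), pow_succ]
  have : (2 : ℝ) ^ d ≤ (fiber T t (a n) (a m)).ncard := by exact_mod_cast hcard
  linarith

end Intervals

theorem exists_mass_increasing_coordinate
    (a : ℕ → ℕ) (hmono : StrictMono a)
    (n m : ℕ) (hnm : n ≤ m)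
    (T : Set (ℕ → Bool))
    (hTsupp : ∀ t ∈ T, ∀ i, (i < a n ∨ a (m+1) ≤ i) → t i = false)
    (hT : ((T.ncard : ℝ) / 2 ^ (a (m+1) - a n)) *
      (∏ j ∈ Finset.Ico n m, (1 + (1/2 : ℝ) ^ j)) < 1/2)
    (s : ℕ → ℕ) (hs : ∀ j, n ≤ j → j ≤ m → a j ≤ s j ∧ s j < a (j+1))
    (hCs : ∀ t : ℕ → Bool, (∀ i, (i < a n ∨ a (m+1) ≤ i) → t i = false) →
      (∀ j, n ≤ j → j ≤ m → t (s j) = false) → t ∈ T) :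
    ∃ k, n ≤ k ∧ k < m ∧ ∃ t : ℕ → Bool,
      (∀ j, n ≤ j → j < k → t (s j) = false) ∧
      {w ∈ T | ∀ i, a n ≤ i → i < a k → w i = t i}.Nonempty ∧
      ∀ t' : ℕ → Bool, t' (s k) = false →
        (({w ∈ T | (∀ i, a n ≤ i → i < a k → w i = t i) ∧
            (∀ i, a k ≤ i → i < a (k+1) → w i = t' i)}.ncard : ℝ) /
          2 ^ (a (m+1) - a (k+1))) >
        (1 + (1/2 : ℝ) ^ k) *
          (({w ∈ T | ∀ i, a n ≤ i → i < a k → w i = t i}.ncard : ℝ) /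
            2 ^ (a (m+1) - a k)) := by
  by_contra! hcon
  have hTfin : T.Finite :=
    (finite_setOf_eq_off_finset (Finset.range (a (m + 1))) fun _ => false).subset
      fun w hw i hi => hTsupp w hw i (Or.inr (by simpa using hi))
  obtain ⟨t, ht, hmass⟩ := exists_le_mul_prod_of_step
    (fun k t => ∀ j, n ≤ j → j < k → t (s j) = false)
    (fun k t => ((fiber T t (a n) (a k)).ncard : ℝ) / 2 ^ (a (m + 1) - a k))
    (fun k => 1 + (1 / 2 : ℝ) ^ k) (fun k => by positivity) hnm (x₀ := fun _ => false)
    (fun _ hnj hjn => absurd hjn (not_lt.2 hnj)) fun k hnk hkm t ht => by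
      obtain ⟨t', ht', hle⟩ := hcon k hnk hkm t ht (fiber_nonempty hmono hs hCs hnk hkm.le ht)
      refine ⟨splice t t' (a k), splice_apply_eq_false hmono hs hkm.le ht ht', ?_⟩
      rwa [fiber_splice (hmono.monotone hnk) (hmono.monotone k.le_succ)]
  rw [fiber_self] at hmass
  linarith [one_half_le_mass_fiber hmono hs hCs hTfin hnm ht]
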